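/- (Theorem 1, vector form) Let h be a random vector in ℂ^n and x, x̃ ∈ ℂ^n fixed, with H = Fh, X = Fx, X̃ = Fx̃ the discrete Fourier transforms. If the random vectors h * x and h * x̃ (circular convolutions) have the same distribution and each component H_k has finite second moment, then for every frequency k with E[|H_k|²] > 0 we have |X_k| = |X̃_k|. -/

import Mathlib

open MeasureTheory ProbabilityTheory Complex ENNReal

/-- Circular convolution of two vectors in `ℂ^n`. -/
noncomputable def circConv {n : ℕ} (a b : Fin n → ℂ) : Fin n → ℂ :=
  fun k => ∑ j : Fin n, a j * b (k - j)

/-- Discrete Fourier transform on `ℂ^n`. -/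
noncomputable def dft {n : ℕ} (x : Fin n → ℂ) : Fin n → ℂ :=
  fun k => ∑ j : Fin n,
    x j * Complex.exp (-2 * Real.pi * Complex.I * ((k : ℕ) : ℂ) * ((j : ℕ) : ℂ) / (n : ℂ))

/-! Taking expectations in `|F(h * x)_k|² = |H_k|² |X_k|²` gives `E|H_k|² |X_k|²`, a quantity
that depends only on the distribution of `h * x`; hence `E|H_k|² |X_k|² = E|H_k|² |X̃_k|²`,
and `|X_k| = |X̃_k|` as soon as `E|H_k|² > 0`. -/

lemma pow_val_add_of_pow_eq_one {n : ℕ} {ω : ℂ} (hω : ω ^ n = 1) (i j : Fin n) :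
    ω ^ ((i + j : Fin n) : ℕ) = ω ^ (i : ℕ) * ω ^ (j : ℕ) := by
  rw [Fin.val_add, ← pow_eq_pow_mod _ hω, pow_add]

lemma sum_circConv_mul_pow {n : ℕ} [NeZero n] {ω : ℂ} (hω : ω ^ n = 1) (a b : Fin n → ℂ) :
    ∑ m, circConv a b m * ω ^ (m : ℕ) =
      (∑ j, a j * ω ^ (j : ℕ)) * ∑ m, b m * ω ^ (m : ℕ) := by
  have shift : ∀ j : Fin n, ∑ m, a j * b (m - j) * ω ^ (m : ℕ) =
      a j * ω ^ (j : ℕ) * ∑ m, b m * ω ^ (m : ℕ) := by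
    intro j
    rw [Finset.mul_sum]
    refine Fintype.sum_equiv (Equiv.subRight j) _ _ fun m => ?_
    rw [Equiv.subRight_apply, mul_mul_mul_comm, ← pow_val_add_of_pow_eq_one hω, add_sub_cancel]
  simp only [circConv, Finset.sum_mul]
  rw [Finset.sum_comm]
  exact Finset.sum_congr rfl fun j _ => shift j

lemma dft_apply_eq_sum_pow {n : ℕ} (x : Fin n → ℂ) (k : Fin n) :
    dft x k = ∑ j, x j * exp (-2 * Real.pi * I * (k : ℕ) / n) ^ (j : ℕ) := by
  refine Finset.sum_congr rfl fun j _ => ?_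
  rw [← exp_nat_mul]
  ring_nf

lemma exp_neg_two_pi_I_mul_div_pow_self {n : ℕ} (hn : n ≠ 0) (k : ℕ) :
    exp (-2 * Real.pi * I * k / n) ^ n = 1 := by
  have hn' : (n : ℂ) ≠ 0 := Nat.cast_ne_zero.mpr hn
  rw [← exp_nat_mul]
  convert exp_int_mul_two_pi_mul_I (-k) using 2
  push_cast
  field_simp

theorem dft_circConv {n : ℕ} (a b : Fin n → ℂ) (k : Fin n) :
    dft (circConv a b) k = dft a k * dft b k := by
  have : NeZero n := ⟨k.pos.ne'⟩
  simp only [dft_apply_eq_sum_pow]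
  exact sum_circConv_mul_pow (exp_neg_two_pi_I_mul_div_pow_self k.pos.ne' k) a b

lemma continuous_dft_apply {n : ℕ} (k : Fin n) : Continuous fun v : Fin n → ℂ => dft v k := by
  unfold dft
  fun_prop

lemma integral_norm_dft_circConv_sq {Ω : Type*} [MeasurableSpace Ω] (μ : Measure Ω) {n : ℕ}
    (h : Ω → Fin n → ℂ) (x : Fin n → ℂ) (k : Fin n) :
    ∫ ω, ‖dft (circConv (h ω) x) k‖ ^ 2 ∂μ = (∫ ω, ‖dft (h ω) k‖ ^ 2 ∂μ) * ‖dft x k‖ ^ 2 := by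
  simp only [dft_circConv, norm_mul, mul_pow, integral_mul_const]

theorem stmt5_general {Ω : Type*} [MeasurableSpace Ω] (μ : Measure Ω)
    {n : ℕ} (h : Ω → Fin n → ℂ) (x xt : Fin n → ℂ)
    (hid : IdentDistrib (fun ω => circConv (h ω) x) (fun ω => circConv (h ω) xt) μ μ) :
    ∀ k : Fin n, 0 < ∫ ω, ‖dft (h ω) k‖ ^ 2 ∂μ →
      ‖dft x k‖ = ‖dft xt k‖ := by
  intro k hk
  have hsecond : IdentDistrib (fun ω => ‖dft (circConv (h ω) x) k‖ ^ 2)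
      (fun ω => ‖dft (circConv (h ω) xt) k‖ ^ 2) μ μ :=
    hid.comp ((continuous_dft_apply k).norm.pow 2).measurable
  have hmoments := hsecond.integral_eq
  rw [integral_norm_dft_circConv_sq, integral_norm_dft_circConv_sq] at hmoments
  exact (pow_left_inj₀ (norm_nonneg _) (norm_nonneg _) two_ne_zero).mp
    (mul_left_cancel₀ hk.ne' hmoments)

/-- Theorem 1, vector form. -/
theorem stmt5 {Ω : Type*} [MeasurableSpace Ω] (μ : Measure Ω) [IsProbabilityMeasure μ]
    {n : ℕ} (h : Ω → Fin n → ℂ) (x xt : Fin n → ℂ)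
    (hfin : ∀ k : Fin n, Integrable (fun ω => ‖dft (h ω) k‖ ^ 2) μ)
    (hid : IdentDistrib (fun ω => circConv (h ω) x) (fun ω => circConv (h ω) xt) μ μ) :
    ∀ k : Fin n, 0 < ∫ ω, ‖dft (h ω) k‖ ^ 2 ∂μ →
      ‖dft x k‖ = ‖dft xt k‖ :=
  stmt5_general μ h x xt hid
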